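/- Conditional convergence of momentum Frank–Wolfe with uniformly bounded gradient-surrogate error (deterministic skeleton of the Acc-SZOFW analysis): let T ≥ 2 be an integer, and suppose there is κ ≥ 0 with ‖∇f(z_t) − v_t‖ ≤ κ for all 0 ≤ t ≤ T−1. Then (1/T) ∑_{t=1}^{T−1} G(z_t) ≤ (f(z_0) − inf_{y∈X} f(y))/(ηT) + 4LηD² + 2Dκ + Dκ (ln T)/T. -/

import Mathlib

/-!
Split the step `z t ↦ z (t + 1)` at `y (t + 1) = z t + η • (w t - z t)`. Smoothness along this
Frank–Wolfe step, together with the inexact linear-minimization oracle, lowers `f` by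
`η * G (z t)` up to `2ηDκ + Lη²D²`. Since `z (t + 1) - y (t + 1)` is `(x (t + 1) - z (t + 1))`
scaled by `1 / (t + 1)`, the averaging step costs at most `m (t + 1) / (t + 1) + Lη²D²/2`, where
`m t` is the positive part of `⟪∇f (z t), x t - z t⟫`. The lag `x t - z t` satisfies a contracting
recursion that keeps its norm below `ηD/2`, whence
`(t + 2) m (t + 1) ≤ (t + 1) m t + (t + 1) Lη²D² + (ηDκ + 2Lη²D²) / (t + 2)`, and summation by
parts bounds `∑ m (t + 1) / (t + 1)` by `T Lη²D² + (ηDκ + 2Lη²D²) T / (T + 1)`. Telescoping `f`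
over `t < T` and `T / (T + 1) ≤ log T` give the bound.
-/

open scoped RealInnerProductSpace

/-- The Frank–Wolfe (duality) gap of `f` over `X` at `x`:
`G(x) = sup_{w ∈ X} ⟪w − x, −∇f(x)⟫`. -/
noncomputable def fwGap {d : ℕ} (f : EuclideanSpace ℝ (Fin d) → ℝ)
    (X : Set (EuclideanSpace ℝ (Fin d))) (x : EuclideanSpace ℝ (Fin d)) : ℝ :=
  sSup ((fun w => ⟪w - x, -gradient f x⟫) '' X)

open Finset

section LipschitzGradient

variable {E : Type*} [NormedAddCommGroup E] [InnerProductSpace ℝ E] [CompleteSpace E]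
  {f : E → ℝ} {L : ℝ}

theorem inner_gradient_le_inner_gradient_add
    (hLip : ∀ u v, ‖gradient f u - gradient f v‖ ≤ L * ‖u - v‖) (u v h : E) :
    ⟪gradient f u, h⟫ ≤ ⟪gradient f v, h⟫ + L * ‖u - v‖ * ‖h‖ := by
  have hcs := real_inner_le_norm (gradient f u - gradient f v) h
  rw [inner_sub_left] at hcs
  nlinarith [mul_le_mul_of_nonneg_right (hLip u v) (norm_nonneg h)]

theorem le_add_inner_gradient_add_mul_norm_sq (hf : Differentiable ℝ f) (hL : 0 ≤ L)
    (hLip : ∀ u v, ‖gradient f u - gradient f v‖ ≤ L * ‖u - v‖) (a b : E) :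
    f b ≤ f a + ⟪gradient f a, b - a⟫ + L * ‖b - a‖ ^ 2 := by
  let g : ℝ → ℝ := fun s => f (a + s • (b - a))
  have hg : ∀ s, HasDerivAt g ⟪gradient f (a + s • (b - a)), b - a⟫ s := fun s =>
    (hf _).hasGradientAt.hasFDerivAt.comp_hasDerivAt s
      ((((hasDerivAt_id s).smul_const (b - a)).const_add a).congr_deriv (one_smul _ _))
  obtain ⟨c, ⟨hc0, hc1⟩, hc⟩ := exists_hasDerivAt_eq_slope g _ zero_lt_one
    (hf.continuous.comp (by fun_prop)).continuousOn (fun s _ => hg s)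
  have hmvt : f b - f a = ⟪gradient f (a + c • (b - a)), b - a⟫ := by
    simpa [g] using hc.symm
  have hnear := inner_gradient_le_inner_gradient_add hLip (a + c • (b - a)) a (b - a)
  rw [add_sub_cancel_left, norm_smul, Real.norm_of_nonneg hc0.le] at hnear
  nlinarith [mul_le_mul_of_nonneg_left hc1.le (mul_nonneg hL (sq_nonneg ‖b - a‖))]

theorem le_add_inner_gradient_right_add_mul_norm_sq (hf : Differentiable ℝ f) (hL : 0 ≤ L)
    (hLip : ∀ u v, ‖gradient f u - gradient f v‖ ≤ L * ‖u - v‖) (a b : E) :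
    f b ≤ f a + ⟪gradient f b, b - a⟫ + 2 * L * ‖b - a‖ ^ 2 := by
  have hnear := inner_gradient_le_inner_gradient_add hLip a b (b - a)
  rw [← neg_sub b a, norm_neg] at hnear
  nlinarith [le_add_inner_gradient_add_mul_norm_sq hf hL hLip a b]

end LipschitzGradient

section FrankWolfeGap

variable {d : ℕ} {f : EuclideanSpace ℝ (Fin d) → ℝ} {X : Set (EuclideanSpace ℝ (Fin d))}
  {x : EuclideanSpace ℝ (Fin d)}

theorem fwGap_nonneg (hX : IsCompact X) (hx : x ∈ X) : 0 ≤ fwGap f X x :=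
  le_csSup ((hX.image (by fun_prop)).bddAbove) ⟨x, hx, by simp⟩

theorem fwGap_le_of_isMaxOn {D κ : ℝ} {w v : EuclideanSpace ℝ (Fin d)} (hx : x ∈ X)
    (hw : w ∈ X) (hdiam : ∀ u ∈ X, ∀ u' ∈ X, ‖u - u'‖ ≤ D)
    (hmax : IsMaxOn (fun w' => ⟪w', -v⟫) X w) (herr : ‖gradient f x - v‖ ≤ κ) :
    fwGap f X x ≤ ⟪w - x, -gradient f x⟫ + 2 * D * κ := by
  have herr_inner : ∀ u ∈ X, ∀ g, ‖g‖ ≤ κ → ⟪u - x, g⟫ ≤ D * κ := fun u hu g hg =>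
    (real_inner_le_norm _ _).trans
      (mul_le_mul_of_nonneg (hdiam u hu x hx) hg (norm_nonneg _) ((norm_nonneg _).trans herr))
  have hw_err := herr_inner w hw _ herr
  refine csSup_le ⟨_, x, hx, rfl⟩ ?_
  rintro _ ⟨w', hw', rfl⟩
  have hw'_err := herr_inner w' hw' _ (norm_sub_rev v (gradient f x) ▸ herr)
  have hopt : ⟪w', -v⟫ ≤ ⟪w, -v⟫ := isMaxOn_iff.mp hmax w' hw'
  simp only [inner_sub_left, inner_sub_right, inner_neg_right] at hw_err hw'_err hopt ⊢
  linarith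

end FrankWolfeGap

theorem sum_range_div_succ_add_le {M : ℕ → ℝ} {a c : ℝ} {T : ℕ}
    (h : ∀ t < T, (t + 2) * M (t + 1) ≤ (t + 1) * M t + (t + 1) * a + c / (t + 2)) :
    ∑ t ∈ range T, M (t + 1) / (t + 1) + M T ≤ M 0 + T * a + c * (T / (T + 1)) := by
  induction T with
  | zero => simp
  | succ T ih =>
    have h1 : (T : ℝ) + 1 ≠ 0 := by positivity
    have h2 : (T : ℝ) + 2 ≠ 0 := by positivity
    have hstep : M (T + 1) / (T + 1) + M (T + 1) - M T ≤ a + c / ((T + 1) * (T + 2)) := by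
      have e1 : M (T + 1) / (T + 1) + M (T + 1) - M T
          = ((T + 2) * M (T + 1) - (T + 1) * M T) / (T + 1) := by
        field_simp
        ring
      have e2 : a + c / ((T + 1) * (T + 2)) = ((T + 1) * a + c / (T + 2)) / (T + 1) := by
        field_simp
      rw [e1, e2]
      gcongr
      linarith [h T T.lt_succ_self]
    have hc : c * ((T + 1) / (T + 1 + 1)) = c * (T / (T + 1)) + c / ((T + 1) * (T + 2)) := by
      rw [add_assoc, one_add_one_eq_two]
      field_simp
      ring
    rw [sum_range_succ]
    push_cast
    linarith [ih fun t ht => h t (ht.trans T.lt_succ_self)]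

theorem div_add_one_le_log {T : ℕ} (hT : 2 ≤ T) : (T : ℝ) / (T + 1) ≤ Real.log T := by
  rcases hT.eq_or_lt with rfl | hT3
  · have := Real.log_two_gt_d9
    norm_num
    linarith
  · have hlog : 1 ≤ Real.log T := by
      rw [Real.le_log_iff_exp_le (by positivity)]
      have h3 : (3 : ℝ) ≤ T := by exact_mod_cast hT3
      linarith [Real.exp_one_lt_d9]
    exact (div_le_one_of_le₀ (by linarith) (by positivity)).trans hlog

noncomputable def fwStepSize (η : ℝ) (t : ℕ) : ℝ :=
  (1 + 1 / (((t : ℝ) + 1) * ((t : ℝ) + 2))) * η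

theorem fwStepSize_nonneg {η : ℝ} (hη : 0 ≤ η) (t : ℕ) : 0 ≤ fwStepSize η t := by
  unfold fwStepSize
  positivity

theorem fwStepSize_le_one {η : ℝ} (hη : 0 ≤ η) (hη' : η ≤ 2 / 3) (t : ℕ) :
    fwStepSize η t ≤ 1 := by
  have hθ : 1 / (((t : ℝ) + 1) * ((t : ℝ) + 2)) ≤ 1 / 2 := by
    gcongr
    nlinarith [t.cast_nonneg (α := ℝ)]
  unfold fwStepSize
  nlinarith

section MomentumFW

variable {E : Type*} [NormedAddCommGroup E] [InnerProductSpace ℝ E]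

structure IsMomentumFW (X : Set E) (η : ℝ) (x y z w v : ℕ → E) : Prop where
  x_zero : x 0 = z 0
  z_zero_mem : z 0 ∈ X
  w_mem : ∀ t, w t ∈ X
  w_isMaxOn : ∀ t, IsMaxOn (fun w' => ⟪w', -v t⟫) X (w t)
  x_succ : ∀ t : ℕ, x (t + 1) = x t + fwStepSize η t • (w t - x t)
  y_succ : ∀ t : ℕ, y (t + 1) = z t + η • (w t - z t)
  z_succ : ∀ t : ℕ,
    z (t + 1) = (1 - 1 / ((t : ℝ) + 2)) • y (t + 1) + (1 / ((t : ℝ) + 2)) • x (t + 1)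

namespace IsMomentumFW

variable {X : Set E} {η D : ℝ} {x y z w v : ℕ → E}

theorem mem (h : IsMomentumFW X η x y z w v) (hX : Convex ℝ X) (hη0 : 0 ≤ η)
    (hη1 : η ≤ 2 / 3) (t : ℕ) : x t ∈ X ∧ z t ∈ X := by
  induction t with
  | zero => exact ⟨h.x_zero ▸ h.z_zero_mem, h.z_zero_mem⟩
  | succ t ih =>
    have hx : x (t + 1) ∈ X := h.x_succ t ▸ hX.add_smul_sub_mem ih.1 (h.w_mem t)
      ⟨fwStepSize_nonneg hη0 t, fwStepSize_le_one hη0 hη1 t⟩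
    have hy : y (t + 1) ∈ X := h.y_succ t ▸ hX.add_smul_sub_mem ih.2 (h.w_mem t)
      ⟨hη0, by linarith⟩
    have hα : 1 / ((t : ℝ) + 2) ≤ 1 := by
      rw [div_le_one (by positivity)]
      linarith [t.cast_nonneg (α := ℝ)]
    exact ⟨hx, h.z_succ t ▸ hX hy hx (by linarith) (by positivity) (by ring)⟩

theorem norm_w_sub_z_le (h : IsMomentumFW X η x y z w v) (hX : Convex ℝ X) (hη0 : 0 ≤ η)
    (hη1 : η ≤ 2 / 3) (hdiam : ∀ u ∈ X, ∀ u' ∈ X, ‖u - u'‖ ≤ D) (t : ℕ) : ‖w t - z t‖ ≤ D :=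
  hdiam _ (h.w_mem t) _ (h.mem hX hη0 hη1 t).2

theorem x_sub_z_succ (h : IsMomentumFW X η x y z w v) (t : ℕ) :
    x (t + 1) - z (t + 1) = (((t : ℝ) + 1) / (t + 2) * (1 - fwStepSize η t)) • (x t - z t)
      + (η / ((t : ℝ) + 2) ^ 2) • (w t - z t) := by
  have h1 : (t : ℝ) + 1 ≠ 0 := by positivity
  have h2 : (t : ℝ) + 2 ≠ 0 := by positivity
  rw [h.z_succ, h.x_succ, h.y_succ, fwStepSize]
  match_scalars <;> field_simp <;> ring

theorem z_sub_y_succ (h : IsMomentumFW X η x y z w v) (t : ℕ) :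
    z (t + 1) - y (t + 1) = (1 / ((t : ℝ) + 1)) • (x (t + 1) - z (t + 1)) := by
  have h1 : (t : ℝ) + 1 ≠ 0 := by positivity
  have h2 : (t : ℝ) + 2 ≠ 0 := by positivity
  rw [h.z_succ]
  match_scalars <;> field_simp <;> ring

theorem norm_x_sub_z_le (h : IsMomentumFW X η x y z w v) (hX : Convex ℝ X) (hη0 : 0 ≤ η)
    (hη1 : η ≤ 2 / 3) (hdiam : ∀ u ∈ X, ∀ u' ∈ X, ‖u - u'‖ ≤ D) (t : ℕ) :
    ‖x t - z t‖ ≤ η * D / 2 := by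
  have hD : 0 ≤ η * D :=
    mul_nonneg hη0 ((norm_nonneg _).trans (h.norm_w_sub_z_le hX hη0 hη1 hdiam 0))
  induction t with
  | zero =>
    rw [h.x_zero, sub_self, norm_zero]
    linarith
  | succ t ih =>
    have hc : ((t : ℝ) + 1) / (t + 2) * (1 - fwStepSize η t) ≤ (t + 1) / (t + 2) :=
      mul_le_of_le_one_right (by positivity) (by linarith [fwStepSize_nonneg hη0 t])
    have hkey : ((t : ℝ) + 1) / (t + 2) * (1 / 2) + 1 / (t + 2) ^ 2 ≤ 1 / 2 := by
      field_simp
      nlinarith [t.cast_nonneg (α := ℝ)]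
    calc ‖x (t + 1) - z (t + 1)‖
        ≤ ((t : ℝ) + 1) / (t + 2) * (1 - fwStepSize η t) * ‖x t - z t‖
          + η / ((t : ℝ) + 2) ^ 2 * ‖w t - z t‖ := by
          rw [h.x_sub_z_succ]
          refine (norm_add_le _ _).trans_eq ?_
          rw [norm_smul, norm_smul, Real.norm_of_nonneg, Real.norm_of_nonneg (by positivity)]
          exact mul_nonneg (by positivity) (by linarith [fwStepSize_le_one hη0 hη1 t])
      _ ≤ ((t : ℝ) + 1) / (t + 2) * (η * D / 2) + η / ((t : ℝ) + 2) ^ 2 * D := by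
          gcongr
          exact h.norm_w_sub_z_le hX hη0 hη1 hdiam t
      _ = η * D * (((t : ℝ) + 1) / (t + 2) * (1 / 2) + 1 / (t + 2) ^ 2) := by ring
      _ ≤ η * D / 2 := by linarith [mul_le_mul_of_nonneg_left hkey hD]

theorem norm_z_succ_sub_le (h : IsMomentumFW X η x y z w v) (hX : Convex ℝ X) (hη0 : 0 ≤ η)
    (hη1 : η ≤ 2 / 3) (hdiam : ∀ u ∈ X, ∀ u' ∈ X, ‖u - u'‖ ≤ D) (t : ℕ) :
    ‖z (t + 1) - z t‖ ≤ 2 * η * D := by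
  have hsplit : z (t + 1) - z t
      = (1 / ((t : ℝ) + 1)) • (x (t + 1) - z (t + 1)) + η • (w t - z t) := by
    rw [← h.z_sub_y_succ, h.y_succ]
    abel
  have hα : 1 / ((t : ℝ) + 1) ≤ 1 := by
    rw [div_le_one (by positivity)]
    linarith [t.cast_nonneg (α := ℝ)]
  have hu := h.norm_x_sub_z_le hX hη0 hη1 hdiam (t + 1)
  have hwz := h.norm_w_sub_z_le hX hη0 hη1 hdiam t
  have hD : 0 ≤ η * D := mul_nonneg hη0 ((norm_nonneg _).trans hwz)
  rw [hsplit]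
  refine (norm_add_le _ _).trans ?_
  rw [norm_smul, norm_smul, Real.norm_of_nonneg (by positivity), Real.norm_of_nonneg hη0]
  nlinarith [mul_le_mul hα hu (norm_nonneg _) zero_le_one, mul_le_mul_of_nonneg_left hwz hη0]

variable [CompleteSpace E] {f : E → ℝ} {L κ : ℝ}

theorem inner_gradient_succ_w_sub_z_le (h : IsMomentumFW X η x y z w v) (hX : Convex ℝ X)
    (hη0 : 0 ≤ η) (hη1 : η ≤ 2 / 3) (hdiam : ∀ u ∈ X, ∀ u' ∈ X, ‖u - u'‖ ≤ D)
    (hL : 0 ≤ L) (hLip : ∀ u v, ‖gradient f u - gradient f v‖ ≤ L * ‖u - v‖) {t : ℕ}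
    (herr : ‖gradient f (z t) - v t‖ ≤ κ) :
    ⟪gradient f (z (t + 1)), w t - z t⟫ ≤ (κ + 2 * L * η * D) * D := by
  have hwz := h.norm_w_sub_z_le hX hη0 hη1 hdiam t
  have hopt : ⟪v t, w t - z t⟫ ≤ 0 := by
    have := isMaxOn_iff.mp (h.w_isMaxOn t) (z t) (h.mem hX hη0 hη1 t).2
    simp only [inner_neg_right, neg_le_neg_iff] at this
    rw [inner_sub_right, real_inner_comm (w t), real_inner_comm (z t)]
    linarith
  have hgv : ‖gradient f (z (t + 1)) - v t‖ ≤ κ + 2 * L * η * D := by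
    have hΔ := h.norm_z_succ_sub_le hX hη0 hη1 hdiam t
    calc ‖gradient f (z (t + 1)) - v t‖
        ≤ ‖gradient f (z (t + 1)) - gradient f (z t)‖ + ‖gradient f (z t) - v t‖ :=
          norm_sub_le_norm_sub_add_norm_sub _ _ _
      _ ≤ L * (2 * η * D) + κ :=
          add_le_add ((hLip _ _).trans (mul_le_mul_of_nonneg_left hΔ hL)) herr
      _ = κ + 2 * L * η * D := by ring
  have hcs := real_inner_le_norm (gradient f (z (t + 1)) - v t) (w t - z t)
  rw [inner_sub_left] at hcs
  nlinarith [mul_le_mul hgv hwz (norm_nonneg _) ((norm_nonneg _).trans hgv)]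

theorem succ_mul_posPart_inner_le (h : IsMomentumFW X η x y z w v) (hX : Convex ℝ X)
    (hη0 : 0 ≤ η) (hη1 : η ≤ 2 / 3) (hdiam : ∀ u ∈ X, ∀ u' ∈ X, ‖u - u'‖ ≤ D) (hL : 0 ≤ L)
    (hLip : ∀ u v, ‖gradient f u - gradient f v‖ ≤ L * ‖u - v‖) {t : ℕ}
    (herr : ‖gradient f (z t) - v t‖ ≤ κ) :
    ((t : ℝ) + 2) * ⟪gradient f (z (t + 1)), x (t + 1) - z (t + 1)⟫⁺
      ≤ ((t : ℝ) + 1) * ⟪gradient f (z t), x t - z t⟫⁺ + (t + 1) * (L * η ^ 2 * D ^ 2)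
        + (η * D * κ + 2 * L * η ^ 2 * D ^ 2) / (t + 2) := by
  set P := ⟪gradient f (z t), x t - z t⟫
  set q := ⟪gradient f (z (t + 1)), x t - z t⟫
  have hγ0 := fwStepSize_nonneg hη0 t
  have hγ1 := fwStepSize_le_one hη0 hη1 t
  have hD : 0 ≤ D := (norm_nonneg _).trans (h.norm_w_sub_z_le hX hη0 hη1 hdiam t)
  have hκ : 0 ≤ κ := (norm_nonneg _).trans herr
  have hq : q ≤ P + L * η ^ 2 * D ^ 2 :=
    calc q ≤ P + L * (‖z (t + 1) - z t‖ * ‖x t - z t‖) := by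
          rw [← mul_assoc]
          exact inner_gradient_le_inner_gradient_add hLip (z (t + 1)) (z t) (x t - z t)
      _ ≤ P + L * (2 * η * D * (η * D / 2)) := by
          gcongr
          · exact h.norm_z_succ_sub_le hX hη0 hη1 hdiam t
          · exact h.norm_x_sub_z_le hX hη0 hη1 hdiam t
      _ = P + L * η ^ 2 * D ^ 2 := by ring
  have hdamp : (1 - fwStepSize η t) * q ≤ P⁺ + L * η ^ 2 * D ^ 2 := by
    have hP := le_posPart P
    rcases le_or_gt q 0 with hq0 | hq0
    · have := mul_nonpos_of_nonneg_of_nonpos (sub_nonneg.2 hγ1) hq0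
      have : 0 ≤ L * η ^ 2 * D ^ 2 := by positivity
      linarith [posPart_nonneg P]
    · nlinarith
  have hw := h.inner_gradient_succ_w_sub_z_le hX hη0 hη1 hdiam hL hLip herr
  set R := (t + 1) / (t + 2) * (P⁺ + L * η ^ 2 * D ^ 2)
    + η / (t + 2) ^ 2 * ((κ + 2 * L * η * D) * D) with hR_def
  have hnext : ⟪gradient f (z (t + 1)), x (t + 1) - z (t + 1)⟫ ≤ R := by
    rw [hR_def, h.x_sub_z_succ, inner_add_right, real_inner_smul_right, real_inner_smul_right,
      mul_assoc]
    gcongr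
  have hR : 0 ≤ R := by
    have := posPart_nonneg P
    positivity
  calc ((t : ℝ) + 2) * ⟪gradient f (z (t + 1)), x (t + 1) - z (t + 1)⟫⁺ ≤ (t + 2) * R := by
        gcongr
        exact sup_le hnext hR
    _ = _ := by
        rw [hR_def]
        field_simp

end IsMomentumFW

end MomentumFW

namespace IsMomentumFW

variable {d : ℕ} {X : Set (EuclideanSpace ℝ (Fin d))} {f : EuclideanSpace ℝ (Fin d) → ℝ}
  {η D L κ : ℝ} {x y z w v : ℕ → EuclideanSpace ℝ (Fin d)}

theorem apply_succ_add_mul_fwGap_le (h : IsMomentumFW X η x y z w v) (hX : Convex ℝ X)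
    (hη0 : 0 ≤ η) (hη1 : η ≤ 2 / 3) (hdiam : ∀ u ∈ X, ∀ u' ∈ X, ‖u - u'‖ ≤ D) (hL : 0 ≤ L)
    (hf : Differentiable ℝ f) (hLip : ∀ u v, ‖gradient f u - gradient f v‖ ≤ L * ‖u - v‖)
    {t : ℕ} (herr : ‖gradient f (z t) - v t‖ ≤ κ) :
    f (z (t + 1)) + η * fwGap f X (z t)
      ≤ f (z t) + 2 * η * D * κ + 3 / 2 * (L * η ^ 2 * D ^ 2)
        + ⟪gradient f (z (t + 1)), x (t + 1) - z (t + 1)⟫⁺ / (t + 1) := by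
  have hwz := h.norm_w_sub_z_le hX hη0 hη1 hdiam t
  have hu := h.norm_x_sub_z_le hX hη0 hη1 hdiam (t + 1)
  have hgap :=
    fwGap_le_of_isMaxOn (h.mem hX hη0 hη1 t).2 (h.w_mem t) hdiam (h.w_isMaxOn t) herr
  rw [inner_neg_right, real_inner_comm (gradient f (z t))] at hgap
  have hA := le_add_inner_gradient_add_mul_norm_sq hf hL hLip (z t) (y (t + 1))
  rw [h.y_succ, add_sub_cancel_left, real_inner_smul_right, norm_smul, Real.norm_of_nonneg hη0,
    ← h.y_succ] at hA
  have hB := le_add_inner_gradient_right_add_mul_norm_sq hf hL hLip (y (t + 1)) (z (t + 1))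
  rw [h.z_sub_y_succ, real_inner_smul_right, norm_smul,
    Real.norm_of_nonneg (by positivity)] at hB
  have hα : 1 / ((t : ℝ) + 1) ≤ 1 := by
    rw [div_le_one (by positivity)]
    linarith [t.cast_nonneg (α := ℝ)]
  have hsqA : L * (η * ‖w t - z t‖) ^ 2 ≤ L * η ^ 2 * D ^ 2 := by
    rw [mul_assoc, ← mul_pow]
    gcongr
  have hsqB : 2 * L * (1 / ((t : ℝ) + 1) * ‖x (t + 1) - z (t + 1)‖) ^ 2
      ≤ 1 / 2 * (L * η ^ 2 * D ^ 2) := by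
    calc 2 * L * (1 / ((t : ℝ) + 1) * ‖x (t + 1) - z (t + 1)‖) ^ 2
        ≤ 2 * L * (1 * (η * D / 2)) ^ 2 := by gcongr
      _ = 1 / 2 * (L * η ^ 2 * D ^ 2) := by ring
  have hpos : 1 / ((t : ℝ) + 1) * ⟪gradient f (z (t + 1)), x (t + 1) - z (t + 1)⟫
      ≤ ⟪gradient f (z (t + 1)), x (t + 1) - z (t + 1)⟫⁺ / (t + 1) := by
    rw [one_div_mul_eq_div]
    gcongr
    exact le_posPart _
  linarith [mul_le_mul_of_nonneg_left hgap hη0]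

theorem mul_sum_fwGap_le (h : IsMomentumFW X η x y z w v) (hX : Convex ℝ X)
    (hη0 : 0 ≤ η) (hη1 : η ≤ 2 / 3) (hdiam : ∀ u ∈ X, ∀ u' ∈ X, ‖u - u'‖ ≤ D) (hL : 0 ≤ L)
    (hf : Differentiable ℝ f) (hLip : ∀ u v, ‖gradient f u - gradient f v‖ ≤ L * ‖u - v‖)
    {T : ℕ} (herr : ∀ t < T, ‖gradient f (z t) - v t‖ ≤ κ) :
    η * ∑ t ∈ range T, fwGap f X (z t)
      ≤ f (z 0) - f (z T) + T * (2 * η * D * κ + 5 / 2 * (L * η ^ 2 * D ^ 2))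
        + (η * D * κ + 2 * L * η ^ 2 * D ^ 2) * (T / (T + 1)) := by
  set M : ℕ → ℝ := fun t => ⟪gradient f (z t), x t - z t⟫⁺
  have hM := sum_range_div_succ_add_le (M := M) fun t ht =>
    h.succ_mul_posPart_inner_le hX hη0 hη1 hdiam hL hLip (herr t ht)
  have hM0 : M 0 = 0 := by simp [M, h.x_zero]
  have hMT : 0 ≤ M T := posPart_nonneg _
  have hstep : ∑ t ∈ range T, (f (z (t + 1)) - f (z t) + η * fwGap f X (z t))
      ≤ ∑ t ∈ range T, (2 * η * D * κ + 3 / 2 * (L * η ^ 2 * D ^ 2) + M (t + 1) / (t + 1)) :=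
    sum_le_sum fun t ht => by
      linarith [h.apply_succ_add_mul_fwGap_le hX hη0 hη1 hdiam hL hf hLip
        (herr t (mem_range.1 ht))]
  rw [sum_add_distrib, sum_range_sub (fun t => f (z t)), ← mul_sum, sum_add_distrib, sum_const,
    card_range, nsmul_eq_mul] at hstep
  linarith

end IsMomentumFW

theorem momentum_fw_convergence_bounded_error_general
    (d : ℕ)
    (X : Set (EuclideanSpace ℝ (Fin d)))
    (hXcomp : IsCompact X) (hXconv : Convex ℝ X)
    (D : ℝ) (hD : 0 < D)
    (hdiam : ∀ u ∈ X, ∀ v ∈ X, ‖u - v‖ ≤ D)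
    (f : EuclideanSpace ℝ (Fin d) → ℝ)
    (L : ℝ) (hL : 0 < L)
    (hdiff : Differentiable ℝ f)
    (hLip : ∀ u v', ‖gradient f u - gradient f v'‖ ≤ L * ‖u - v'‖)
    (η : ℝ) (hη : 0 < η) (hη23 : η < 2 / 3)
    (x y z w v : ℕ → EuclideanSpace ℝ (Fin d))
    (hx0 : x 0 = z 0) (hz0 : z 0 ∈ X)
    (hwX : ∀ t, w t ∈ X)
    (hwopt : ∀ t, ∀ w' ∈ X, ⟪w', -(v t)⟫ ≤ ⟪w t, -(v t)⟫)
    (hxrec : ∀ t : ℕ, x (t + 1)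
      = x t + ((1 + 1 / (((t : ℝ) + 1) * ((t : ℝ) + 2))) * η) • (w t - x t))
    (hyrec : ∀ t : ℕ, y (t + 1) = z t + η • (w t - z t))
    (hzrec : ∀ t : ℕ, z (t + 1)
      = (1 - 1 / ((t : ℝ) + 2)) • y (t + 1) + (1 / ((t : ℝ) + 2)) • x (t + 1))
    (T : ℕ) (hT : 2 ≤ T)
    (κ : ℝ) (hκ : 0 ≤ κ)
    (herr : ∀ t : ℕ, t < T → ‖gradient f (z t) - v t‖ ≤ κ) :
    (1 / (T : ℝ)) * ∑ t ∈ Finset.Ico 1 T, fwGap f X (z t)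
      ≤ (f (z 0) - sInf (f '' X)) / (η * T) + 4 * L * η * D ^ 2
        + 2 * D * κ + D * κ * Real.log T / T := by
  have hrun : IsMomentumFW X η x y z w v :=
    ⟨hx0, hz0, hwX, fun t => isMaxOn_iff.mpr (hwopt t), hxrec, hyrec, hzrec⟩
  have hsum := hrun.mul_sum_fwGap_le hXconv hη.le hη23.le hdiam hL.le hdiff hLip herr
  rw [range_eq_Ico, sum_eq_sum_Ico_succ_bot (by omega), zero_add, mul_add, add_mul] at hsum
  have hgap0 := mul_nonneg hη.le (fwGap_nonneg (f := f) hXcomp hz0)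
  have hinf : sInf (f '' X) ≤ f (z T) := csInf_le (hXcomp.image hdiff.continuous).bddBelow
    ⟨z T, (hrun.mem hXconv hη.le hη23.le T).2, rfl⟩
  have hT0 : (0 : ℝ) < T := by positivity
  have hT2 : (2 : ℝ) ≤ T := by exact_mod_cast hT
  have hlog :=
    mul_le_mul_of_nonneg_left (div_add_one_le_log hT) (by positivity : 0 ≤ η * D * κ)
  have hfrac : 2 * L * η ^ 2 * D ^ 2 * (T / (T + 1)) ≤ 2 * L * η ^ 2 * D ^ 2 :=
    mul_le_of_le_one_right (by positivity) ((div_le_one (by positivity)).2 (by linarith))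
  have hLT : 0 ≤ L * η ^ 2 * D ^ 2 * (3 * T - 4) := mul_nonneg (by positivity) (by linarith)
  rw [← mul_le_mul_iff_of_pos_left (mul_pos hη hT0)]
  calc η * T * (1 / T * ∑ t ∈ Ico 1 T, fwGap f X (z t))
        = η * ∑ t ∈ Ico 1 T, fwGap f X (z t) := by field_simp
    _ ≤ f (z 0) - sInf (f '' X) + 4 * L * η ^ 2 * D ^ 2 * T + 2 * η * D * κ * T
        + η * D * κ * Real.log T := by
        linarith
    _ = _ := by
        field_simp

/-- Conditional convergence of momentum Frank–Wolfe with uniformly bounded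
gradient-surrogate error (deterministic skeleton of the Acc-SZOFW analysis). -/
theorem momentum_fw_convergence_bounded_error
    (d : ℕ) (hd : 1 ≤ d)
    (X : Set (EuclideanSpace ℝ (Fin d))) (hXne : X.Nonempty)
    (hXcomp : IsCompact X) (hXconv : Convex ℝ X)
    (D : ℝ) (hD : 0 < D)
    (hdiam : ∀ u ∈ X, ∀ v ∈ X, ‖u - v‖ ≤ D)
    (f : EuclideanSpace ℝ (Fin d) → ℝ)
    (L : ℝ) (hL : 0 < L)
    (hdiff : Differentiable ℝ f)
    (hLip : ∀ u v', ‖gradient f u - gradient f v'‖ ≤ L * ‖u - v'‖)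
    (η : ℝ) (hη : 0 < η) (hη23 : η < 2 / 3)
    (x y z w v : ℕ → EuclideanSpace ℝ (Fin d))
    (hx0 : x 0 = z 0) (hy0 : y 0 = z 0) (hz0 : z 0 ∈ X)
    (hwX : ∀ t, w t ∈ X)
    (hwopt : ∀ t, ∀ w' ∈ X, ⟪w', -(v t)⟫ ≤ ⟪w t, -(v t)⟫)
    (hxrec : ∀ t : ℕ, x (t + 1)
      = x t + ((1 + 1 / (((t : ℝ) + 1) * ((t : ℝ) + 2))) * η) • (w t - x t))
    (hyrec : ∀ t : ℕ, y (t + 1) = z t + η • (w t - z t))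
    (hzrec : ∀ t : ℕ, z (t + 1)
      = (1 - 1 / ((t : ℝ) + 2)) • y (t + 1) + (1 / ((t : ℝ) + 2)) • x (t + 1))
    (T : ℕ) (hT : 2 ≤ T)
    (κ : ℝ) (hκ : 0 ≤ κ)
    (herr : ∀ t : ℕ, t < T → ‖gradient f (z t) - v t‖ ≤ κ) :
    (1 / (T : ℝ)) * ∑ t ∈ Finset.Ico 1 T, fwGap f X (z t)
      ≤ (f (z 0) - sInf (f '' X)) / (η * T) + 4 * L * η * D ^ 2
        + 2 * D * κ + D * κ * Real.log T / T :=
  momentum_fw_convergence_bounded_error_general d X hXcomp hXconv D hD hdiam f L hL hdiff hLip η hη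
    hη23 x y z w v hx0 hz0 hwX hwopt hxrec hyrec hzrec T hT κ hκ herr
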